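/- Let K ⊇ ℚ, and let A be a complete filtered K-algebra with a distinguished group-like invertible element η (i.e. Δη = η⊗̂η in the complete Hopf algebra structure) with η − 1 ∈ F₁A, so that log η = Σ_{n≥1} (−1)^{n−1}(η−1)ⁿ/n converges. Then for any a ∈ K the element η^a := exp(a·log η) is well defined, group-like, and satisfies η^a · η^b = η^{a+b} for all a, b ∈ K and η^1 = η. -/

import Mathlib

/-!
Truncated at degree `N`, the exponential and logarithm series are inverse to each other modulo
`X ^ (N + 1)`: the two composites satisfy, to that order, the differential equations
`(1 + X) f' = f` and `g' = 1` of `1 + X` and `X`. Likewise `exp x * exp y` and `exp (x + y)`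
differ only by terms of total degree `> N` when `x` and `y` commute. Evaluated at elements of
`F 1`, such congruences become equalities of limits in a separated filtered algebra, giving
`exp (log η) = η`, `exp (a • L) * exp (b • L) = exp ((a + b) • L)` and `log (exp y) = y`.
In `B` the last identity shows that `L = log η` is primitive, since
`Δ η = l η * r η = exp (l L + r L)`; hence
`Δ (exp (a • L)) = exp (a • l L) * exp (a • r L)` is group-like.
-/

open Finset

/-- Convergence of a sequence `s` to `L` with respect to a decreasing filtration
`F` on an algebra. -/
def IsFilteredLimit {K A : Type*} [CommRing K] [Ring A] [Algebra K A]
    (F : ℕ → Submodule K A) (s : ℕ → A) (L : A) : Prop :=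
  ∀ n : ℕ, ∃ N : ℕ, ∀ m : ℕ, N ≤ m → s m - L ∈ F n

open Polynomial
open scoped Nat

noncomputable def expTrunc (N : ℕ) : ℚ[X] :=
  ∑ k ∈ range (N + 1), C (1 / k ! : ℚ) * X ^ k

noncomputable def logTrunc (N : ℕ) : ℚ[X] :=
  ∑ n ∈ Icc 1 N, C ((-1) ^ (n + 1) / n : ℚ) * X ^ n

theorem expTrunc_succ (N : ℕ) :
    expTrunc (N + 1) = expTrunc N + C (1 / (N + 1)! : ℚ) * X ^ (N + 1) :=
  sum_range_succ _ _

theorem logTrunc_succ (N : ℕ) :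
    logTrunc (N + 1) = logTrunc N + C ((-1) ^ (N + 2) / (N + 1) : ℚ) * X ^ (N + 1) := by
  rw [logTrunc, sum_Icc_succ_top (by omega)]
  push_cast
  rfl

theorem X_pow_succ_dvd_expTrunc_succ_sub (N : ℕ) :
    X ^ (N + 1) ∣ expTrunc (N + 1) - expTrunc N :=
  ⟨C (1 / (N + 1)! : ℚ), by rw [expTrunc_succ]; ring⟩

theorem X_pow_succ_dvd_logTrunc_succ_sub (N : ℕ) :
    X ^ (N + 1) ∣ logTrunc (N + 1) - logTrunc N :=
  ⟨C ((-1) ^ (N + 2) / (N + 1) : ℚ), by rw [logTrunc_succ]; ring⟩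

theorem X_dvd_expTrunc_sub_one (N : ℕ) : X ∣ expTrunc N - 1 := by
  simp [X_dvd_iff, expTrunc]

theorem X_dvd_logTrunc (N : ℕ) : X ∣ logTrunc N := by
  simp [X_dvd_iff, logTrunc]

theorem derivative_expTrunc_succ (N : ℕ) : derivative (expTrunc (N + 1)) = expTrunc N := by
  induction N with
  | zero => simp [expTrunc, sum_range_succ]
  | succ N ih =>
    rw [expTrunc_succ, derivative_add, ih, expTrunc_succ, derivative_C_mul_X_pow]
    congr 2
    push_cast [Nat.factorial_succ]
    field_simp

theorem one_add_X_mul_derivative_logTrunc (N : ℕ) :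
    (1 + X) * derivative (logTrunc N) = 1 - (-X) ^ N := by
  induction N with
  | zero => simp [logTrunc]
  | succ N ih =>
    have hc : C ((-1) ^ (N + 2) / (N + 1) * (N + 1 : ℕ) : ℚ) = (-1) ^ N := by
      push_cast
      rw [div_mul_cancel₀ _ (by positivity)]
      simp [pow_succ]
    rw [logTrunc_succ, derivative_add, derivative_C_mul_X_pow, Nat.add_sub_cancel, hc, mul_add,
      ih]
    ring

theorem X_pow_dvd_derivative_expTrunc_sub (N : ℕ) :
    X ^ N ∣ derivative (expTrunc N) - expTrunc N := by
  rcases N with _ | N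
  · simp
  · rw [derivative_expTrunc_succ, ← neg_sub]
    exact (X_pow_succ_dvd_expTrunc_succ_sub N).neg_right

theorem X_pow_dvd_one_add_X_mul_derivative_logTrunc_sub_one (N : ℕ) :
    X ^ N ∣ (1 + X) * derivative (logTrunc N) - 1 :=
  ⟨-(-1) ^ N, by rw [one_add_X_mul_derivative_logTrunc]; ring⟩

namespace Polynomial

theorem X_pow_dvd_comp {R : Type*} [CommSemiring R] {p q : R[X]} {n : ℕ} (hp : X ^ n ∣ p)
    (hq : X ∣ q) : X ^ n ∣ p.comp q := by
  obtain ⟨r, rfl⟩ := hp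
  rw [mul_comp, X_pow_comp]
  exact (pow_dvd_pow_of_dvd hq n).mul_right _

theorem X_dvd_comp {R : Type*} [CommSemiring R] {p q : R[X]} (hp : X ∣ p) (hq : X ∣ q) :
    X ∣ p.comp q := by
  simpa only [pow_one] using X_pow_dvd_comp (n := 1) (by rwa [pow_one]) hq

variable {R : Type*} [CommRing R] [IsAddTorsionFree R] {p : R[X]} {N : ℕ}

theorem coeff_succ_eq_zero_of_coeff_derivative {d : ℕ} (h : (derivative p).coeff d = 0) :
    p.coeff (d + 1) = 0 := by
  have : (d + 1) • p.coeff (d + 1) = 0 := by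
    rwa [coeff_derivative, mul_comm, ← Nat.cast_succ, ← nsmul_eq_mul] at h
  exact (smul_eq_zero.mp this).resolve_left d.succ_ne_zero

theorem X_pow_succ_dvd_of_X_pow_dvd_derivative (hp : X ^ N ∣ derivative p) (h0 : X ∣ p) :
    X ^ (N + 1) ∣ p := by
  rw [X_pow_dvd_iff] at hp ⊢
  rintro (_ | d) hd
  · exact X_dvd_iff.mp h0
  · exact coeff_succ_eq_zero_of_coeff_derivative (hp d (by omega))

theorem X_pow_succ_dvd_of_X_pow_dvd_one_add_X_mul_derivative_sub
    (hp : X ^ N ∣ (1 + X) * derivative p - p) (h0 : X ∣ p) : X ^ (N + 1) ∣ p := by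
  rw [X_pow_dvd_iff] at hp ⊢
  intro d hd
  induction d with
  | zero => exact X_dvd_iff.mp h0
  | succ d ih =>
    have hXd : (X * derivative p).coeff d = 0 := by
      rcases d with _ | e
      · exact coeff_X_mul_zero _
      · rw [coeff_X_mul, coeff_derivative, ih (by omega), zero_mul]
    have h := hp d (by omega)
    rw [coeff_sub, add_mul, one_mul, coeff_add, hXd, ih (by omega), add_zero, sub_zero] at h
    exact coeff_succ_eq_zero_of_coeff_derivative h

end Polynomial

theorem X_pow_succ_dvd_expTrunc_comp_logTrunc_sub (N : ℕ) :
    X ^ (N + 1) ∣ (expTrunc N).comp (logTrunc N) - (1 + X) := by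
  set f := (expTrunc N).comp (logTrunc N)
  have hode : X ^ N ∣ (1 + X) * derivative f - f := by
    have e : (1 + X) * derivative f - f
        = ((1 + X) * derivative (logTrunc N) - 1) * (derivative (expTrunc N)).comp (logTrunc N)
          + (derivative (expTrunc N) - expTrunc N).comp (logTrunc N) := by
      rw [derivative_comp, sub_comp]; ring
    rw [e]
    exact dvd_add ((X_pow_dvd_one_add_X_mul_derivative_logTrunc_sub_one N).mul_right _)
      (X_pow_dvd_comp (X_pow_dvd_derivative_expTrunc_sub N) (X_dvd_logTrunc N))
  have hf0 : X ∣ f - 1 := by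
    simpa only [sub_comp, one_comp] using
      X_dvd_comp (X_dvd_expTrunc_sub_one N) (X_dvd_logTrunc N)
  apply X_pow_succ_dvd_of_X_pow_dvd_one_add_X_mul_derivative_sub
  · convert hode using 1
    rw [derivative_sub, derivative_add, derivative_one, derivative_X]
    ring
  · rw [← sub_sub]
    exact dvd_sub hf0 dvd_rfl

theorem X_pow_succ_dvd_logTrunc_comp_expTrunc_sub_one_sub (N : ℕ) :
    X ^ (N + 1) ∣ (logTrunc N).comp (expTrunc N - 1) - X := by
  apply X_pow_succ_dvd_of_X_pow_dvd_derivative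
  · have e : derivative ((logTrunc N).comp (expTrunc N - 1) - X)
        = (derivative (expTrunc N) - expTrunc N) * (derivative (logTrunc N)).comp (expTrunc N - 1)
          + ((1 + X) * derivative (logTrunc N) - 1).comp (expTrunc N - 1) := by
      rw [derivative_sub, derivative_X, derivative_comp, derivative_sub, derivative_one, sub_zero,
        sub_comp, mul_comp, add_comp, one_comp, X_comp]
      ring
    rw [e]
    exact dvd_add ((X_pow_dvd_derivative_expTrunc_sub N).mul_right _)
      (X_pow_dvd_comp (X_pow_dvd_one_add_X_mul_derivative_logTrunc_sub_one N)
        (X_dvd_expTrunc_sub_one N))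
  · exact dvd_sub (X_dvd_comp (X_dvd_logTrunc N) (X_dvd_expTrunc_sub_one N)) dvd_rfl

theorem Commute.algebraMap_mul_add_pow {R : Type*} [Ring R] [Algebra ℚ R] {x y : R}
    (hxy : Commute x y) (k : ℕ) :
    algebraMap ℚ R (1 / k !) * (x + y) ^ k
      = ∑ p ∈ antidiagonal k,
          algebraMap ℚ R (1 / p.1 !) * x ^ p.1 * (algebraMap ℚ R (1 / p.2 !) * y ^ p.2) := by
  rw [hxy.add_pow', mul_sum]
  refine sum_congr rfl fun ⟨i, j⟩ hij => ?_
  rw [HasAntidiagonal.mem_antidiagonal] at hij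
  subst hij
  dsimp only
  rw [nsmul_eq_mul, ← mul_assoc, ← map_natCast (algebraMap ℚ R), ← map_mul,
    mul_assoc (algebraMap ℚ R _) (x ^ i), Algebra.left_comm (x ^ i),
    ← mul_assoc (algebraMap ℚ R (1 / i !)), ← map_mul, Nat.cast_add_choose]
  congr 2
  field_simp

section Filtration

variable {K R : Type*} [CommRing K] [Ring R] [Algebra K R] {F : ℕ → Submodule K R}

structure IsSeparatedFiltration (F : ℕ → Submodule K R) : Prop where
  zero_eq_top : F 0 = ⊤
  antitone : Antitone F
  mul_mem {m n : ℕ} {x y : R} : x ∈ F m → y ∈ F n → x * y ∈ F (m + n)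
  eq_zero_of_forall_mem (x : R) : (∀ n, x ∈ F n) → x = 0

def IsFilteredComplete (F : ℕ → Submodule K R) : Prop :=
  ∀ s : ℕ → R, (∀ n, s (n + 1) - s n ∈ F n) → ∃ L, IsFilteredLimit F s L

namespace IsFilteredLimit

variable {s t : ℕ → R} {L : R}

theorem of_sub_mem (hF : Antitone F) (h : ∀ N, s N - L ∈ F (N + 1)) : IsFilteredLimit F s L :=
  fun n => ⟨n, fun m hm => hF (by omega) (h m)⟩

theorem congr_sub_mem (hF : Antitone F) (hs : IsFilteredLimit F s L)
    (h : ∀ N, t N - s N ∈ F (N + 1)) : IsFilteredLimit F t L := by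
  intro n
  obtain ⟨N, hN⟩ := hs n
  refine ⟨max N n, fun m hm => ?_⟩
  rw [← sub_add_sub_cancel]
  exact add_mem (hF (by omega) (h m)) (hN m (le_of_max_le_left hm))

theorem sub_mem_of_succ_sub_mem (hF : Antitone F) (hd : ∀ M, s (M + 1) - s M ∈ F (M + 1))
    (hs : IsFilteredLimit F s L) (N : ℕ) : L - s N ∈ F (N + 1) := by
  have hstep : ∀ M, N ≤ M → s M - s N ∈ F (N + 1) := by
    intro M hM
    induction M, hM using Nat.le_induction with
    | base => simp
    | succ M hNM ih =>
      rw [← sub_add_sub_cancel]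
      exact add_mem (hF (by omega) (hd M)) ih
  obtain ⟨M, hM⟩ := hs (N + 1)
  rw [← sub_sub_sub_cancel_left _ _ (s (max M N))]
  exact Submodule.sub_mem _ (hstep _ (le_max_right _ _)) (hM _ (le_max_left _ _))

theorem map {R' : Type*} [Ring R'] [Algebra K R'] {G : ℕ → Submodule K R'} {Φ : Type*}
    [FunLike Φ R R'] [RingHomClass Φ R R'] (f : Φ) (hf : ∀ n, ∀ x ∈ F n, f x ∈ G n)
    (hs : IsFilteredLimit F s L) : IsFilteredLimit G (fun N => f (s N)) (f L) := by
  intro n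
  obtain ⟨N, hN⟩ := hs n
  exact ⟨N, fun m hm => by simpa only [map_sub] using hf n _ (hN m hm)⟩

end IsFilteredLimit

namespace IsSeparatedFiltration

theorem mul_mem_left (hF : IsSeparatedFiltration F) {n : ℕ} {x : R} (c : R) (hx : x ∈ F n) :
    c * x ∈ F n := by
  simpa using hF.mul_mem (m := 0) (by simp [hF.zero_eq_top]) hx

theorem mul_mem_right (hF : IsSeparatedFiltration F) {n : ℕ} {x : R} (hx : x ∈ F n) (c : R) :
    x * c ∈ F n := by
  simpa using hF.mul_mem (n := 0) hx (by simp [hF.zero_eq_top])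

theorem pow_mem (hF : IsSeparatedFiltration F) {x : R} (hx : x ∈ F 1) (n : ℕ) :
    x ^ n ∈ F n := by
  induction n with
  | zero => simp [hF.zero_eq_top]
  | succ n ih => rw [pow_succ]; exact hF.mul_mem ih hx

theorem pow_sub_pow_mem (hF : IsSeparatedFiltration F) {x y : R} {n : ℕ} (h : x - y ∈ F n)
    (k : ℕ) : x ^ k - y ^ k ∈ F n := by
  induction k with
  | zero => simp
  | succ k ih =>
    have e : x ^ (k + 1) - y ^ (k + 1) = (x ^ k - y ^ k) * x + y ^ k * (x - y) := by
      simp only [pow_succ, sub_mul, mul_sub]; abel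
    rw [e]
    exact add_mem (hF.mul_mem_right ih x) (hF.mul_mem_left _ h)

theorem isFilteredLimit_unique (hF : IsSeparatedFiltration F) {s : ℕ → R} {L L' : R}
    (h : IsFilteredLimit F s L) (h' : IsFilteredLimit F s L') : L = L' := by
  refine sub_eq_zero.mp (hF.eq_zero_of_forall_mem _ fun n => ?_)
  obtain ⟨N, hN⟩ := h n
  obtain ⟨N', hN'⟩ := h' n
  rw [← sub_sub_sub_cancel_left _ _ (s (max N N'))]
  exact Submodule.sub_mem _ (hN' _ (le_max_right _ _)) (hN _ (le_max_left _ _))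

theorem isFilteredLimit_mul (hF : IsSeparatedFiltration F) {s t : ℕ → R} {u v : R}
    (hs : IsFilteredLimit F s u) (ht : IsFilteredLimit F t v) :
    IsFilteredLimit F (fun N => s N * t N) (u * v) := by
  intro n
  obtain ⟨N, hN⟩ := hs n
  obtain ⟨N', hN'⟩ := ht n
  refine ⟨max N N', fun m hm => ?_⟩
  have e : s m * t m - u * v = (s m - u) * t m + u * (t m - v) := by
    simp only [sub_mul, mul_sub]; abel
  rw [e]
  exact add_mem (hF.mul_mem_right (hN m (le_of_max_le_left hm)) _)
    (hF.mul_mem_left _ (hN' m (le_of_max_le_right hm)))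

theorem sum_range_mul_sum_range_sub_mem (hF : IsSeparatedFiltration F) {a b : ℕ → R}
    (ha : ∀ i, a i ∈ F i) (hb : ∀ j, b j ∈ F j) (N : ℕ) :
    (∑ i ∈ range (N + 1), a i) * (∑ j ∈ range (N + 1), b j)
      - ∑ k ∈ range (N + 1), ∑ p ∈ antidiagonal k, a p.1 * b p.2 ∈ F (N + 1) := by
  set S := range (N + 1) ×ˢ range (N + 1)
  have hdiag : ∑ k ∈ range (N + 1), ∑ p ∈ antidiagonal k, a p.1 * b p.2
      = ∑ p ∈ S with p.1 + p.2 ≤ N, a p.1 * b p.2 := by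
    rw [← sum_fiberwise_of_maps_to (g := fun p : ℕ × ℕ => p.1 + p.2) (t := range (N + 1))
      (fun p hp => by simp only [mem_filter] at hp; simp only [mem_range]; omega)]
    refine sum_congr rfl fun k hk => sum_congr ?_ fun _ _ => rfl
    ext ⟨i, j⟩
    simp only [mem_range] at hk
    simp only [S, HasAntidiagonal.mem_antidiagonal, mem_filter, mem_product, mem_range]
    omega
  rw [sum_mul_sum, ← sum_product', hdiag,
    ← sum_filter_add_sum_filter_not S (fun p => p.1 + p.2 ≤ N), add_sub_cancel_left]
  refine Submodule.sum_mem _ fun p hp => ?_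
  simp only [mem_filter, not_le] at hp
  exact hF.antitone hp.2 (hF.mul_mem (ha p.1) (hb p.2))

variable {S : Type*} [CommRing S] [Algebra S R] {x : R} {p : ℕ → S[X]}

theorem aeval_mem_of_X_pow_dvd (hF : IsSeparatedFiltration F) (hx : x ∈ F 1) {q : S[X]} {n : ℕ}
    (hq : X ^ n ∣ q) : aeval x q ∈ F n := by
  obtain ⟨q, rfl⟩ := hq
  rw [map_mul, map_pow, aeval_X]
  exact hF.mul_mem_right (hF.pow_mem hx n) _

theorem aeval_sub_aeval_mem (hF : IsSeparatedFiltration F) {y : R} {n : ℕ} (h : x - y ∈ F n)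
    (q : S[X]) : aeval x q - aeval y q ∈ F n := by
  induction q using Polynomial.induction_on' with
  | add q q' hq hq' => rw [map_add, map_add, add_sub_add_comm]; exact add_mem hq hq'
  | monomial k c =>
    rw [aeval_monomial, aeval_monomial, ← mul_sub]
    exact hF.mul_mem_left _ (hF.pow_sub_pow_mem h k)

theorem exists_isFilteredLimit_aeval (hF : IsSeparatedFiltration F)
    (hcomplete : IsFilteredComplete F)
    (hx : x ∈ F 1) (hp : ∀ N, X ^ (N + 1) ∣ p (N + 1) - p N) :
    ∃ L, IsFilteredLimit F (fun N => aeval x (p N)) L :=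
  hcomplete _ fun N => hF.antitone N.le_succ <| by
    rw [← map_sub]; exact hF.aeval_mem_of_X_pow_dvd hx (hp N)

theorem sub_aeval_mem_of_isFilteredLimit (hF : IsSeparatedFiltration F) (hx : x ∈ F 1)
    (hp : ∀ N, X ^ (N + 1) ∣ p (N + 1) - p N) {L : R}
    (hL : IsFilteredLimit F (fun N => aeval x (p N)) L) (N : ℕ) :
    L - aeval x (p N) ∈ F (N + 1) :=
  hL.sub_mem_of_succ_sub_mem hF.antitone
    (fun M => by rw [← map_sub]; exact hF.aeval_mem_of_X_pow_dvd hx (hp M)) N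

theorem isFilteredLimit_aeval_of_X_pow_dvd_comp_sub (hF : IsSeparatedFiltration F)
    (hx : x ∈ F 1) {q : ℕ → S[X]} {y : R} (hy : ∀ N, y - aeval x (q N) ∈ F (N + 1))
    {r : S[X]} (hpq : ∀ N, X ^ (N + 1) ∣ (p N).comp (q N) - r) :
    IsFilteredLimit F (fun N => aeval y (p N)) (aeval x r) := by
  refine .of_sub_mem hF.antitone fun N => ?_
  rw [← sub_add_sub_cancel _ (aeval x ((p N).comp (q N))), ← map_sub, aeval_comp]
  exact add_mem (hF.aeval_sub_aeval_mem (hy N) _) (hF.aeval_mem_of_X_pow_dvd hx (hpq N))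

end IsSeparatedFiltration

variable [Algebra ℚ R]

def IsFilteredExp (F : ℕ → Submodule K R) (x E : R) : Prop :=
  IsFilteredLimit F
    (fun N => ∑ k ∈ Finset.range (N + 1), algebraMap ℚ R (1 / (Nat.factorial k)) * x ^ k) E

/-- `L` is the logarithm of `1 + x`. -/
def IsFilteredLogOneAdd (F : ℕ → Submodule K R) (x L : R) : Prop :=
  IsFilteredLimit F
    (fun N => ∑ n ∈ Finset.Icc 1 N, algebraMap ℚ R ((-1) ^ (n + 1) / n) * x ^ n) L

theorem isFilteredExp_iff {x E : R} :
    IsFilteredExp F x E ↔ IsFilteredLimit F (fun N => aeval x (expTrunc N)) E := by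
  simp [IsFilteredExp, expTrunc]

theorem isFilteredLogOneAdd_iff {x L : R} :
    IsFilteredLogOneAdd F x L ↔ IsFilteredLimit F (fun N => aeval x (logTrunc N)) L := by
  simp [IsFilteredLogOneAdd, logTrunc]

section Map

variable {R' : Type*} [Ring R'] [Algebra K R'] [Algebra ℚ R'] {G : ℕ → Submodule K R'}
  {Φ : Type*} [FunLike Φ R R'] [RingHomClass Φ R R'] (f : Φ)

theorem IsFilteredExp.map (hf : ∀ n, ∀ x ∈ F n, f x ∈ G n) {x E : R}
    (h : IsFilteredExp F x E) : IsFilteredExp G (f x) (f E) := by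
  have hq (c : ℚ) : f (algebraMap ℚ R c) = algebraMap ℚ R' c :=
    RingHom.map_rat_algebraMap (f : R →+* R') c
  simpa [IsFilteredExp, hq] using IsFilteredLimit.map f hf h

theorem IsFilteredLogOneAdd.map (hf : ∀ n, ∀ x ∈ F n, f x ∈ G n) {x L : R}
    (h : IsFilteredLogOneAdd F x L) : IsFilteredLogOneAdd G (f x) (f L) := by
  have hq (c : ℚ) : f (algebraMap ℚ R c) = algebraMap ℚ R' c :=
    RingHom.map_rat_algebraMap (f : R →+* R') c
  simpa [IsFilteredLogOneAdd, hq] using IsFilteredLimit.map f hf h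

end Map

namespace IsSeparatedFiltration

theorem exists_isFilteredExp (hF : IsSeparatedFiltration F) (hcomplete : IsFilteredComplete F)
    {x : R} (hx : x ∈ F 1) : ∃ E, IsFilteredExp F x E := by
  simpa only [isFilteredExp_iff] using
    hF.exists_isFilteredLimit_aeval hcomplete hx X_pow_succ_dvd_expTrunc_succ_sub

theorem exists_isFilteredLogOneAdd (hF : IsSeparatedFiltration F) (hcomplete : IsFilteredComplete F)
    {x : R} (hx : x ∈ F 1) : ∃ L, IsFilteredLogOneAdd F x L := by
  simpa only [isFilteredLogOneAdd_iff] using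
    hF.exists_isFilteredLimit_aeval hcomplete hx X_pow_succ_dvd_logTrunc_succ_sub

theorem mem_one_of_isFilteredLogOneAdd (hF : IsSeparatedFiltration F) {x L : R} (hx : x ∈ F 1)
    (hL : IsFilteredLogOneAdd F x L) : L ∈ F 1 := by
  rw [isFilteredLogOneAdd_iff] at hL
  simpa [logTrunc] using
    hF.sub_aeval_mem_of_isFilteredLimit hx X_pow_succ_dvd_logTrunc_succ_sub hL 0

theorem isFilteredExp_add (hF : IsSeparatedFiltration F) {x y u v : R} (hx : x ∈ F 1)
    (hy : y ∈ F 1) (hxy : Commute x y) (hu : IsFilteredExp F x u) (hv : IsFilteredExp F y v) :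
    IsFilteredExp F (x + y) (u * v) := by
  refine (hF.isFilteredLimit_mul hu hv).congr_sub_mem hF.antitone fun N => ?_
  simp only [hxy.algebraMap_mul_add_pow]
  rw [← neg_sub]
  exact neg_mem <| hF.sum_range_mul_sum_range_sub_mem
    (fun i => hF.mul_mem_left _ (hF.pow_mem hx i)) (fun j => hF.mul_mem_left _ (hF.pow_mem hy j)) N

theorem eq_one_add_of_isFilteredExp_of_isFilteredLogOneAdd (hF : IsSeparatedFiltration F)
    {x L E : R} (hx : x ∈ F 1) (hL : IsFilteredLogOneAdd F x L) (hE : IsFilteredExp F L E) :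
    E = 1 + x := by
  rw [isFilteredLogOneAdd_iff] at hL
  rw [isFilteredExp_iff] at hE
  simpa using hF.isFilteredLimit_unique hE <| hF.isFilteredLimit_aeval_of_X_pow_dvd_comp_sub hx
    (hF.sub_aeval_mem_of_isFilteredLimit hx X_pow_succ_dvd_logTrunc_succ_sub hL)
    X_pow_succ_dvd_expTrunc_comp_logTrunc_sub

theorem eq_of_isFilteredLogOneAdd_of_isFilteredExp (hF : IsSeparatedFiltration F) {y E W : R}
    (hy : y ∈ F 1) (hE : IsFilteredExp F y E) (hW : IsFilteredLogOneAdd F (E - 1) W) : W = y := by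
  rw [isFilteredExp_iff] at hE
  rw [isFilteredLogOneAdd_iff] at hW
  have hE' (N : ℕ) : E - 1 - aeval y (expTrunc N - 1) ∈ F (N + 1) := by
    rw [map_sub, map_one, sub_sub_sub_cancel_right]
    exact hF.sub_aeval_mem_of_isFilteredLimit hy X_pow_succ_dvd_expTrunc_succ_sub hE N
  simpa using hF.isFilteredLimit_unique hW <| hF.isFilteredLimit_aeval_of_X_pow_dvd_comp_sub hy hE'
    X_pow_succ_dvd_logTrunc_comp_expTrunc_sub_one_sub

section Coproduct

variable {R' : Type*} [Ring R'] [Algebra K R'] [Algebra ℚ R'] {G : ℕ → Submodule K R'}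
  {Φ : Type*} [FunLike Φ R R'] [RingHomClass Φ R R'] {Δ l r : Φ}

theorem map_eq_mul_of_isFilteredExp (hG : IsSeparatedFiltration G)
    (hΔ : ∀ n, ∀ x ∈ F n, Δ x ∈ G n) (hl : ∀ n, ∀ x ∈ F n, l x ∈ G n)
    (hr : ∀ n, ∀ x ∈ F n, r x ∈ G n) (hcomm : ∀ x y, Commute (l x) (r y)) {x E : R}
    (hx : x ∈ F 1) (hprim : Δ x = l x + r x) (hE : IsFilteredExp F x E) : Δ E = l E * r E :=
  hG.isFilteredLimit_unique (hprim ▸ hE.map Δ hΔ) <|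
    hG.isFilteredExp_add (hl 1 x hx) (hr 1 x hx) (hcomm x x) (hE.map l hl) (hE.map r hr)

theorem map_eq_add_of_isFilteredLogOneAdd (hG : IsSeparatedFiltration G)
    (hΔ : ∀ n, ∀ x ∈ F n, Δ x ∈ G n) (hl : ∀ n, ∀ x ∈ F n, l x ∈ G n)
    (hr : ∀ n, ∀ x ∈ F n, r x ∈ G n) (hcomm : ∀ x y, Commute (l x) (r y)) {u L : R}
    (hL1 : L ∈ F 1) (hu : Δ u = l u * r u) (hL : IsFilteredLogOneAdd F (u - 1) L)
    (hE : IsFilteredExp F L u) : Δ L = l L + r L := by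
  have hexp : IsFilteredExp G (l L + r L) (Δ u) := by
    rw [hu]
    exact hG.isFilteredExp_add (hl 1 L hL1) (hr 1 L hL1) (hcomm L L) (hE.map l hl) (hE.map r hr)
  have hlog : IsFilteredLogOneAdd G (Δ u - 1) (Δ L) := by simpa using hL.map Δ hΔ
  exact hG.eq_of_isFilteredLogOneAdd_of_isFilteredExp (add_mem (hl 1 L hL1) (hr 1 L hL1))
    hexp hlog

end Coproduct

end IsSeparatedFiltration

end Filtration

theorem groupLike_real_powers_general
    {K A B : Type*} [CommRing K] [Algebra ℚ K] [Ring A] [Algebra K A] [Algebra ℚ A]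
    [Ring B] [Algebra K B]
    (F : ℕ → Submodule K A) (G : ℕ → Submodule K B)
    (hF0 : F 0 = ⊤) (hFanti : ∀ n, F (n + 1) ≤ F n)
    (hFmul : ∀ m n : ℕ, ∀ x y : A, x ∈ F m → y ∈ F n → x * y ∈ F (m + n))
    (hFsep : ∀ x : A, (∀ n, x ∈ F n) → x = 0)
    (hFcomplete : ∀ s : ℕ → A, (∀ n, s (n + 1) - s n ∈ F n) →
      ∃ L, IsFilteredLimit F s L)
    (hG0 : G 0 = ⊤) (hGanti : ∀ n, G (n + 1) ≤ G n)
    (hGmul : ∀ m n : ℕ, ∀ x y : B, x ∈ G m → y ∈ G n → x * y ∈ G (m + n))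
    (hGsep : ∀ x : B, (∀ n, x ∈ G n) → x = 0)
    (Δ l r : A →ₐ[K] B)
    (hΔF : ∀ n : ℕ, ∀ x ∈ F n, Δ x ∈ G n)
    (hlF : ∀ n : ℕ, ∀ x ∈ F n, l x ∈ G n)
    (hrF : ∀ n : ℕ, ∀ x ∈ F n, r x ∈ G n)
    (hcomm : ∀ x y : A, l x * r y = r y * l x)
    (η : A) (hη1 : η - 1 ∈ F 1)
    (hηgl : Δ η = l η * r η) :
    ∃ L : A,
      IsFilteredLimit F
        (fun N => ∑ n ∈ Finset.Icc 1 N,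
          algebraMap ℚ A ((-1) ^ (n + 1) / n) * (η - 1) ^ n) L ∧
      ∃ P : K → A,
        (∀ a : K, IsFilteredLimit F
          (fun N => ∑ k ∈ Finset.range (N + 1),
            algebraMap ℚ A (1 / (Nat.factorial k)) * (a • L) ^ k) (P a)) ∧
        (∀ P' : K → A, (∀ a : K, IsFilteredLimit F
          (fun N => ∑ k ∈ Finset.range (N + 1),
            algebraMap ℚ A (1 / (Nat.factorial k)) * (a • L) ^ k) (P' a)) → P' = P) ∧
        (∀ a : K, Δ (P a) = l (P a) * r (P a)) ∧
        (∀ a b : K, P a * P b = P (a + b)) ∧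
        P 1 = η := by
  have hF : IsSeparatedFiltration F :=
    ⟨hF0, antitone_nat_of_succ_le hFanti, hFmul _ _ _ _, hFsep⟩
  have hG : IsSeparatedFiltration G :=
    ⟨hG0, antitone_nat_of_succ_le hGanti, hGmul _ _ _ _, hGsep⟩
  let : Algebra ℚ B := Algebra.compHom B (algebraMap ℚ K)
  obtain ⟨L, hL⟩ := hF.exists_isFilteredLogOneAdd hFcomplete hη1
  have hL1 : L ∈ F 1 := hF.mem_one_of_isFilteredLogOneAdd hη1 hL
  have haL (a : K) : a • L ∈ F 1 := (F 1).smul_mem a hL1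
  choose P hP using fun a : K => hF.exists_isFilteredExp hFcomplete (haL a)
  have hPL : IsFilteredExp F L (P 1) := by simpa using hP 1
  have hP1 : P 1 = η := by
    simpa using hF.eq_one_add_of_isFilteredExp_of_isFilteredLogOneAdd hη1 hL hPL
  have hprim : Δ L = l L + r L :=
    hG.map_eq_add_of_isFilteredLogOneAdd hΔF hlF hrF hcomm hL1 hηgl hL (hP1 ▸ hPL)
  refine ⟨L, hL, P, hP, fun P' hP' => funext fun a => hF.isFilteredLimit_unique (hP' a) (hP a),
    fun a => ?_, fun a b => ?_, hP1⟩
  · refine hG.map_eq_mul_of_isFilteredExp hΔF hlF hrF hcomm (haL a) ?_ (hP a)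
    rw [map_smul, hprim, smul_add, map_smul, map_smul]
  · refine hF.isFilteredLimit_unique ?_ (hP (a + b))
    rw [add_smul]
    exact hF.isFilteredExp_add (haL a) (haL b) (((Commute.refl L).smul_left a).smul_right b)
      (hP a) (hP b)

/-- let `K ⊇ ℚ` and let `A` be a complete (separated) filtered
`K`-algebra, with complete Hopf structure given by a continuous coproduct
`Δ : A → B` into a complete filtered algebra `B` playing the role of `A ⊗̂ A`,
with the two continuous inclusions `l = (· ⊗̂ 1)` and `r = (1 ⊗̂ ·)` having
commuting images.  Let `η` be a group-like (`Δη = η ⊗̂ η`) invertible element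
with `η − 1 ∈ F₁A`, so that `log η = Σ_{n ≥ 1} (−1)^{n−1}(η−1)ⁿ/n` converges.
Then for every `a ∈ K` the element `η^a := exp(a·log η)` is well defined
(the defining series converge, with unique limits), each `η^a` is group-like,
and `η^a · η^b = η^{a+b}` for all `a, b ∈ K`, with `η^1 = η`. -/
theorem groupLike_real_powers
    {K A B : Type*} [CommRing K] [Algebra ℚ K] [Ring A] [Algebra K A] [Algebra ℚ A]
    [Ring B] [Algebra K B]
    (F : ℕ → Submodule K A) (G : ℕ → Submodule K B)
    (hF0 : F 0 = ⊤) (hFanti : ∀ n, F (n + 1) ≤ F n)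
    (hFmul : ∀ m n : ℕ, ∀ x y : A, x ∈ F m → y ∈ F n → x * y ∈ F (m + n))
    (hFsep : ∀ x : A, (∀ n, x ∈ F n) → x = 0)
    (hFcomplete : ∀ s : ℕ → A, (∀ n, s (n + 1) - s n ∈ F n) →
      ∃ L, IsFilteredLimit F s L)
    (hG0 : G 0 = ⊤) (hGanti : ∀ n, G (n + 1) ≤ G n)
    (hGmul : ∀ m n : ℕ, ∀ x y : B, x ∈ G m → y ∈ G n → x * y ∈ G (m + n))
    (hGsep : ∀ x : B, (∀ n, x ∈ G n) → x = 0)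
    (Δ l r : A →ₐ[K] B)
    (hΔF : ∀ n : ℕ, ∀ x ∈ F n, Δ x ∈ G n)
    (hlF : ∀ n : ℕ, ∀ x ∈ F n, l x ∈ G n)
    (hrF : ∀ n : ℕ, ∀ x ∈ F n, r x ∈ G n)
    (hcomm : ∀ x y : A, l x * r y = r y * l x)
    (η : A) (hηu : IsUnit η) (hη1 : η - 1 ∈ F 1)
    (hηgl : Δ η = l η * r η) :
    ∃ L : A,
      IsFilteredLimit F
        (fun N => ∑ n ∈ Finset.Icc 1 N,
          algebraMap ℚ A ((-1) ^ (n + 1) / n) * (η - 1) ^ n) L ∧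
      ∃ P : K → A,
        (∀ a : K, IsFilteredLimit F
          (fun N => ∑ k ∈ Finset.range (N + 1),
            algebraMap ℚ A (1 / (Nat.factorial k)) * (a • L) ^ k) (P a)) ∧
        (∀ P' : K → A, (∀ a : K, IsFilteredLimit F
          (fun N => ∑ k ∈ Finset.range (N + 1),
            algebraMap ℚ A (1 / (Nat.factorial k)) * (a • L) ^ k) (P' a)) → P' = P) ∧
        (∀ a : K, Δ (P a) = l (P a) * r (P a)) ∧
        (∀ a b : K, P a * P b = P (a + b)) ∧
        P 1 = η :=
  groupLike_real_powers_general F G hF0 hFanti hFmul hFsep hFcomplete hG0 hGanti hGmul hGsep Δ l r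
    hΔF hlF hrF hcomm η hη1 hηgl
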